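/- Suppose there exists a faithful assignment T ↦ ≼_T such that for all T': Mod(T ∘ T') \ Triv = Min(Mod(T') \ Triv, ≼_T); if T' is consistent then Min(Mod(T') \ Triv, ≼_T) ≠ ∅; and for all T'', if (T ∘ T') ∪ T'' is consistent then Min(Mod(T') \ Triv, ≼_T) ∩ Mod(T'') = Min(Mod(T' ∪ T'') \ Triv, ≼_T). Then ∘ satisfies the AGM postulates (G1), (G2), (G3), (G5), (G6). -/
import Mathlib


open Set

variable {Sen ModT : Type*}

/-- Models of a set of sentences. -/
def ModS (sat : ModT → Sen → Prop) (T : Set Sen) : Set ModT := {M | ∀ φ ∈ T, sat M φ}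

/-- Sentences satisfied by every model of a class. -/
def starS (sat : ModT → Sen → Prop) (Ms : Set ModT) : Set Sen := {φ | ∀ M ∈ Ms, sat M φ}

/-- Semantic consequences. -/
def Cn (sat : ModT → Sen → Prop) (T : Set Sen) : Set Sen := starS sat (ModS sat T)

/-- Trivial models: those satisfying every sentence. -/
def Triv (sat : ModT → Sen → Prop) : Set ModT := {M | ∀ φ, sat M φ}

/-- Consistency: Cn(T) ≠ Sen. -/
def Consistent (sat : ModT → Sen → Prop) (T : Set Sen) : Prop := Cn sat T ≠ Set.univ

/-- Strict part of a binary relation. -/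
def precRel (r : ModT → ModT → Prop) (M M' : ModT) : Prop := r M M' ∧ ¬ r M' M

/-- Minimal elements of a class of models w.r.t. a relation. -/
def MinSet (Ms : Set ModT) (r : ModT → ModT → Prop) : Set ModT :=
  {M ∈ Ms | ∀ M' ∈ Ms, ¬ precRel r M' M}

/-- Faithful assignment. -/
def Faithful (sat : ModT → Sen → Prop) (f : Set Sen → ModT → ModT → Prop) : Prop :=
  (∀ T M M', M ∈ ModS sat T → M' ∈ ModS sat T → ¬ precRel (f T) M M') ∧
  (∀ T M M', M ∈ ModS sat T → M' ∉ ModS sat T → precRel (f T) M M')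

/-- The AGM postulates (G1)-(G6) for a revision operator. -/
def AGM (sat : ModT → Sen → Prop) (rev : Set Sen → Set Sen → Set Sen) : Prop :=
  (∀ T T', Consistent sat T' → Consistent sat (rev T T')) ∧
  (∀ T T', ModS sat (rev T T') ⊆ ModS sat T') ∧
  (∀ T T', Consistent sat (T ∪ T') → rev T T' = T ∪ T') ∧
  (∀ T T₁ T₂, Cn sat T₁ = Cn sat T₂ → ModS sat (rev T T₁) = ModS sat (rev T T₂)) ∧
  (∀ T T' T'', ModS sat (rev T T' ∪ T'') ⊆ ModS sat (rev T (T' ∪ T''))) ∧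
  (∀ T T' T'', Consistent sat (rev T T' ∪ T'') →
    ModS sat (rev T (T' ∪ T'')) ⊆ ModS sat (rev T T' ∪ T''))

/-- FA+ : a faithful assignment satisfying the three minimality conditions. -/
def FAplus (sat : ModT → Sen → Prop) (rev : Set Sen → Set Sen → Set Sen)
    (f : Set Sen → ModT → ModT → Prop) : Prop :=
  Faithful sat f ∧
  ∀ T T' : Set Sen,
    (ModS sat (rev T T') \ Triv sat = MinSet (ModS sat T' \ Triv sat) (f T)) ∧
    (Consistent sat T' → (MinSet (ModS sat T' \ Triv sat) (f T)).Nonempty) ∧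
    (∀ T'' : Set Sen, Consistent sat (rev T T' ∪ T'') →
      MinSet (ModS sat T' \ Triv sat) (f T) ∩ ModS sat T'' =
        MinSet (ModS sat (T' ∪ T'') \ Triv sat) (f T))

/-- {M,M'}^*, the set of sentences satisfied by both M and M'. -/
def pairStar (sat : ModT → Sen → Prop) (M M' : ModT) : Set Sen := {φ | sat M φ ∧ sat M' φ}


lemma triv_subset_ModS (sat : ModT → Sen → Prop) (T : Set Sen) : Triv sat ⊆ ModS sat T :=
  fun M hM φ _ => hM φ

lemma ModS_union (sat : ModT → Sen → Prop) (A B : Set Sen) :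
    ModS sat (A ∪ B) = ModS sat A ∩ ModS sat B := by
  ext M
  constructor
  · intro h
    exact ⟨fun φ hφ => h φ (Or.inl hφ), fun φ hφ => h φ (Or.inr hφ)⟩
  · rintro ⟨h1, h2⟩ φ (hφ | hφ)
    · exact h1 φ hφ
    · exact h2 φ hφ

lemma consistent_iff (sat : ModT → Sen → Prop) (T : Set Sen) :
    Consistent sat T ↔ (ModS sat T \ Triv sat).Nonempty := by
  unfold Consistent Cn starS Triv
  constructor
  · intro h
    by_contra hne
    apply h
    ext φ
    simp only [Set.mem_setOf_eq, Set.mem_univ, iff_true]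
    intro M hM
    exact by
      by_contra hs
      exact hne ⟨M, hM, fun hMt => hs (hMt φ)⟩
  · rintro ⟨M, hM, hMt⟩ h
    apply hMt
    intro φ
    have : φ ∈ (Set.univ : Set Sen) := Set.mem_univ φ
    rw [← h] at this
    exact this M hM

theorem AGM_of_faithful_min (sat : ModT → Sen → Prop) (rev : Set Sen → Set Sen → Set Sen)
    (f : Set Sen → ModT → ModT → Prop)
    (hF : Faithful sat f)
    (h1 : ∀ T T' : Set Sen,
      ModS sat (rev T T') \ Triv sat = MinSet (ModS sat T' \ Triv sat) (f T))
    (h2 : ∀ T T' : Set Sen, Consistent sat T' →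
      (MinSet (ModS sat T' \ Triv sat) (f T)).Nonempty)
    (h3 : ∀ T T' T'' : Set Sen, Consistent sat (rev T T' ∪ T'') →
      MinSet (ModS sat T' \ Triv sat) (f T) ∩ ModS sat T'' =
        MinSet (ModS sat (T' ∪ T'') \ Triv sat) (f T)) :
    (∀ T T', Consistent sat T' → Consistent sat (rev T T')) ∧
    (∀ T T', ModS sat (rev T T') ⊆ ModS sat T') ∧
    (∀ T T', Consistent sat (T ∪ T') → ModS sat (rev T T') = ModS sat (T ∪ T')) ∧
    (∀ T T' T'', ModS sat (rev T T' ∪ T'') ⊆ ModS sat (rev T (T' ∪ T''))) ∧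
    (∀ T T' T'', Consistent sat (rev T T' ∪ T'') →
      ModS sat (rev T (T' ∪ T'')) ⊆ ModS sat (rev T T' ∪ T'')) := by
  have hdiff_eq : ∀ {A B : Set ModT}, Triv sat ⊆ A → Triv sat ⊆ B →
      A \ Triv sat = B \ Triv sat → A = B := by
    intro A B hA hB hAB
    ext M
    constructor
    · intro hM
      by_cases ht : M ∈ Triv sat
      · exact hB ht
      · have : M ∈ B \ Triv sat := hAB ▸ Set.mem_diff_of_mem hM ht
        exact this.1
    · intro hM
      by_cases ht : M ∈ Triv sat
      · exact hA ht
      · have : M ∈ A \ Triv sat := hAB.symm ▸ Set.mem_diff_of_mem hM ht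
        exact this.1
  refine ⟨?_, ?_, ?_, ?_, ?_⟩
  · -- G1
    intro T T' hT'
    rw [consistent_iff, h1]
    exact h2 T T' hT'
  · -- G2
    intro T T' M hM
    by_cases ht : M ∈ Triv sat
    · exact triv_subset_ModS sat T' ht
    · have : M ∈ MinSet (ModS sat T' \ Triv sat) (f T) := (h1 T T') ▸ ⟨hM, ht⟩
      exact this.1.1
  · -- G3
    intro T T' hcons
    apply hdiff_eq (triv_subset_ModS sat _) (triv_subset_ModS sat _)
    rw [h1 T T']
    obtain ⟨M0, hM0, hM0t⟩ := (consistent_iff sat _).mp hcons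
    rw [ModS_union] at hM0
    ext M
    constructor
    · rintro ⟨⟨hMT', hMt⟩, hmin⟩
      refine ⟨?_, hMt⟩
      rw [ModS_union]
      refine ⟨?_, hMT'⟩
      by_contra hMT
      exact hmin M0 ⟨hM0.2, hM0t⟩ (hF.2 T M0 M hM0.1 hMT)
    · rintro ⟨hMU, hMt⟩
      rw [ModS_union] at hMU
      refine ⟨⟨hMU.2, hMt⟩, ?_⟩
      rintro M' ⟨hM'T', hM't⟩ hprec
      by_cases hM'T : M' ∈ ModS sat T
      · exact hF.1 T M' M hM'T hMU.1 hprec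
      · exact hprec.2 (hF.2 T M M' hMU.1 hM'T).1
  · -- G5
    intro T T' T'' M hM
    by_cases ht : M ∈ Triv sat
    · exact triv_subset_ModS sat _ ht
    · have hcons : Consistent sat (rev T T' ∪ T'') := by
        rw [consistent_iff]; exact ⟨M, hM, ht⟩
      rw [ModS_union] at hM
      have hM1 : M ∈ MinSet (ModS sat T' \ Triv sat) (f T) := (h1 T T') ▸ ⟨hM.1, ht⟩
      have : M ∈ MinSet (ModS sat (T' ∪ T'') \ Triv sat) (f T) :=
        (h3 T T' T'' hcons) ▸ ⟨hM1, hM.2⟩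
      exact ((h1 T (T' ∪ T'')) ▸ this : M ∈ ModS sat (rev T (T' ∪ T'')) \ Triv sat).1
  · -- G6
    intro T T' T'' hcons M hM
    by_cases ht : M ∈ Triv sat
    · exact triv_subset_ModS sat _ ht
    · have h1' : M ∈ MinSet (ModS sat (T' ∪ T'') \ Triv sat) (f T) :=
        (h1 T (T' ∪ T'')) ▸ ⟨hM, ht⟩
      have : M ∈ MinSet (ModS sat T' \ Triv sat) (f T) ∩ ModS sat T'' :=
        (h3 T T' T'' hcons).symm ▸ h1'
      rw [ModS_union]
      exact ⟨((h1 T T').symm ▸ this.1 : M ∈ ModS sat (rev T T') \ Triv sat).1, this.2⟩
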